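/- arXiv:2410.17553 — 3 statements merged into one kernel-verified Lean document; each statement's English description precedes it below -/
import Mathlib

section
/- Let n ≥ 2, τ ≥ 1, e = n(n−1)/2. Let v = (V^{(1)},…,V^{(τ)}) ∈ ℝ^{nτ}, and for each node i define the point x_i = (V_i^{(1)},…,V_i^{(τ)}) ∈ ℝ^τ. Then the null space of A(v)ᵀ ∈ ℝ^{e×nτ} is carried onto the null space of the rigidity matrix R(x) ∈ ℝ^{e×nτ} by the coordinate reindexing z = (z^{(1)},…,z^{(τ)}) ↦ ẋ with ẋ_i = (z_i^{(1)},…,z_i^{(τ)}); consequently rank A(v)ᵀ = rank R(x), and hence rank A(v) = rank R(x). -/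
open Matrix BigOperators

/-- Edges of the complete graph on `Fin n`: ordered pairs `(i, j)` with `i < j`. -/
abbrev CEdge (n : ℕ) := {p : Fin n × Fin n // p.1 < p.2}

/-- Incidence matrix of the complete graph on `Fin n`, each edge `(i, j)` (with `i < j`)
oriented from `i` to `j`:  `H i l = 1` if edge `l` leaves node `i`, `-1` if it enters `i`,
and `0` otherwise. -/
def incid (F : Type*) [Field F] (n : ℕ) : Matrix (Fin n) (CEdge n) F :=
  Matrix.of fun i l => if i = l.val.1 then 1 else if i = l.val.2 then -1 else 0

/-- Voltage coefficient matrix `Ã(V) = H ⬝ diag(Hᵀ V)`. -/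
def Atilde {F : Type*} [Field F] {n : ℕ} (V : Fin n → F) : Matrix (Fin n) (CEdge n) F :=
  incid F n * Matrix.diagonal ((incid F n)ᵀ *ᵥ V)

/-- Stacked voltage coefficient matrix `A(v)` for `τ` measurements `v 1, …, v τ`:
the row indexed by `(k, i)` is the `i`-th row of `Ã(V^(k))`. -/
def Astack {F : Type*} [Field F] {n τ : ℕ} (v : Fin τ → Fin n → F) :
    Matrix (Fin τ × Fin n) (CEdge n) F :=
  Matrix.of fun p l => Atilde (v p.1) p.2 l

/-- Rigidity matrix of the complete graph at the configuration `x = (x 1, …, x n)`,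
`x i ∈ F^τ`: the row indexed by edge `(i, j)`, `i < j`, has the entries of `(x i − x j)ᵀ`
in the `τ` columns of node `i`, the entries of `(x j − x i)ᵀ` in the `τ` columns of node `j`,
and zeros elsewhere. -/
def rigidityM {F : Type*} [Field F] {n τ : ℕ} (x : Fin n → Fin τ → F) :
    Matrix (CEdge n) (Fin n × Fin τ) F :=
  Matrix.of fun l p =>
    if p.1 = l.val.1 then x l.val.1 p.2 - x l.val.2 p.2
    else if p.1 = l.val.2 then x l.val.2 p.2 - x l.val.1 p.2
    else 0

/-!
Column `(k, i)` of `A(v)ᵀ` has, in the row of the edge `(i, j)`, the entry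
`H i l · (Hᵀ V⁽ᵏ⁾)_l = ±(V⁽ᵏ⁾_i − V⁽ᵏ⁾_j)`, which is exactly the entry of `R(x)` in row `(i, j)` and
column `(i, k)`. So `A(v)ᵀ` is `R(x)` with its columns permuted by `(k, i) ↦ (i, k)`, and the
null-space correspondence and the rank equalities follow, the last one from `rank Mᵀ = rank M`.
-/

lemma incid_transpose_mulVec_apply {F : Type*} [Field F] {n : ℕ} (V : Fin n → F)
    (l : CEdge n) : ((incid F n)ᵀ *ᵥ V) l = V l.val.1 - V l.val.2 := by
  have hne : l.val.1 ≠ l.val.2 := l.prop.ne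
  rw [mulVec, dotProduct, Fintype.sum_eq_add _ _ hne fun i hi => by simp [incid, hi.1, hi.2]]
  simp [incid, hne.symm, sub_eq_add_neg]

lemma transpose_Astack {F : Type*} [Field F] {n τ : ℕ} (v : Fin τ → Fin n → F) :
    (Astack v)ᵀ = (rigidityM fun i k => v k i).submatrix id (Equiv.prodComm (Fin τ) (Fin n)) := by
  ext l ⟨k, i⟩
  simp only [transpose_apply, Astack, Atilde, of_apply, mul_diagonal, incid_transpose_mulVec_apply,
    submatrix_apply, id_eq, Equiv.prodComm_apply, Prod.swap_prod_mk, rigidityM]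
  simp only [incid, of_apply]
  by_cases h₁ : i = l.val.1 <;> by_cases h₂ : i = l.val.2 <;> simp_all

theorem stmt2_general (n τ : ℕ) (v : Fin τ → Fin n → ℝ) :
    (∀ z : Fin τ × Fin n → ℝ,
        (Astack v)ᵀ *ᵥ z = 0 ↔
        rigidityM (fun i k => v k i) *ᵥ (fun p : Fin n × Fin τ => z (p.2, p.1)) = 0) ∧
    ((Astack v)ᵀ.rank = (rigidityM (fun i k => v k i)).rank) ∧
    ((Astack v).rank = (rigidityM (fun i k => v k i)).rank) := by
  have hrank : (Astack v)ᵀ.rank = (rigidityM fun i k => v k i).rank := by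
    rw [transpose_Astack]
    exact rank_submatrix _ (Equiv.refl _) _
  refine ⟨fun z => ?_, hrank, (rank_transpose _).symm.trans hrank⟩
  rw [transpose_Astack, submatrix_mulVec_equiv]
  rfl

/-- the null space of `A(v)ᵀ` is carried onto the null space of the rigidity
matrix `R(x)` (at the configuration `x i = (V_i^(1), …, V_i^(τ))`) by the coordinate
reindexing `z ↦ ẋ`, `ẋ i = (z_i^(1), …, z_i^(τ))`; consequently
`rank A(v)ᵀ = rank R(x)` and hence `rank A(v) = rank R(x)`. -/
theorem stmt2 (n τ : ℕ) (hn : 2 ≤ n) (hτ : 1 ≤ τ) (v : Fin τ → Fin n → ℝ) :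
    (∀ z : Fin τ × Fin n → ℝ,
        (Astack v)ᵀ *ᵥ z = 0 ↔
        rigidityM (fun i k => v k i) *ᵥ (fun p : Fin n × Fin τ => z (p.2, p.1)) = 0) ∧
    ((Astack v)ᵀ.rank = (rigidityM (fun i k => v k i)).rank) ∧
    ((Astack v).rank = (rigidityM (fun i k => v k i)).rank) :=
  stmt2_general n τ v
end

section
/- Let n ≥ 2, τ = n − 1, e = n(n−1)/2, and let v = (V^{(1)},…,V^{(τ)}) ∈ ℝ^{nτ} be such that the nτ real numbers {V_i^{(k)} : 1 ≤ i ≤ n, 1 ≤ k ≤ τ} are algebraically independent over ℚ. Then the stacked voltage coefficient matrix A(v) ∈ ℝ^{nτ×e} has rank e; equivalently, the linear map y ↦ A(v)y on ℝ^e is injective, so for every i ∈ ℝ^{nτ} the equation i = A(v)y has at most one solution y ∈ ℝ^e. -/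
open Matrix BigOperators

/-! `A(v) y = 0` says exactly that the edge-weighted Laplacian `L_y = H diag(y) Hᵀ` kills every
measurement `V^(k)`; it also kills the all-ones vector. For generic `v` the `n` vectors
`1, V^(1), …, V^(n-1)` are linearly independent, since the determinant of the matrix they form
is a nonzero polynomial in the coordinates (it specializes to an upper unitriangular matrix).
Hence `L_y = 0`, and the off-diagonal entries of `L_y` are the `-y_l`. -/

section Laplacian

variable {F : Type*} [Field F] {n : ℕ}

lemma incid_col (l : CEdge n) :
    (fun i => incid F n i l) = Pi.single l.val.1 1 - Pi.single l.val.2 1 := by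
  have hne : l.val.1 ≠ l.val.2 := l.prop.ne
  ext i
  by_cases h1 : i = l.val.1 <;> by_cases h2 : i = l.val.2 <;> simp_all [incid]

lemma incid_transpose_mulVec (V : Fin n → F) (l : CEdge n) :
    ((incid F n)ᵀ *ᵥ V) l = V l.val.1 - V l.val.2 := by
  change (fun i => incid F n i l) ⬝ᵥ V = _
  rw [incid_col, sub_dotProduct, single_dotProduct, single_dotProduct, one_mul, one_mul]

lemma incid_mul_incid_of_lt {a b : Fin n} (hab : a < b) (l : CEdge n) :
    incid F n a l * incid F n b l = if l = ⟨(a, b), hab⟩ then -1 else 0 := by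
  obtain ⟨⟨p, q⟩, hpq⟩ := l
  simp only [incid, of_apply, Subtype.mk.injEq, Prod.mk.injEq]
  split_ifs <;> grind

def weightedLaplacian (y : CEdge n → F) : Matrix (Fin n) (Fin n) F :=
  incid F n * diagonal y * (incid F n)ᵀ

lemma Atilde_mulVec (V : Fin n → F) (y : CEdge n → F) :
    Atilde V *ᵥ y = weightedLaplacian y *ᵥ V := by
  rw [Atilde, weightedLaplacian, ← mulVec_mulVec, ← mulVec_mulVec, ← mulVec_mulVec]
  congr 1
  ext l
  simp only [mulVec_diagonal, mul_comm]

lemma weightedLaplacian_mulVec_one (y : CEdge n → F) : weightedLaplacian y *ᵥ 1 = 0 := by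
  have : (incid F n)ᵀ *ᵥ (1 : Fin n → F) = 0 := by
    ext l
    simp [incid_transpose_mulVec]
  rw [weightedLaplacian, ← mulVec_mulVec, this, mulVec_zero]

lemma weightedLaplacian_apply_of_lt (y : CEdge n → F) {a b : Fin n} (hab : a < b) :
    weightedLaplacian y a b = -y ⟨(a, b), hab⟩ := by
  rw [weightedLaplacian, mul_apply]
  simp_rw [mul_diagonal, transpose_apply, mul_right_comm _ (y _), incid_mul_incid_of_lt hab]
  simp

theorem Astack_mulVec_injective {τ : ℕ} {v : Fin τ → Fin n → F}
    (hv : Submodule.span F (insert 1 (Set.range v)) = ⊤) :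
    Function.Injective (Astack v).mulVecLin := by
  refine (injective_iff_map_eq_zero _).2 fun y hy => ?_
  have hspan : Submodule.span F (insert 1 (Set.range v))
      ≤ LinearMap.ker (weightedLaplacian y).mulVecLin := by
    rw [Submodule.span_le]
    rintro w (rfl | ⟨k, rfl⟩)
    · exact weightedLaplacian_mulVec_one y
    · rw [SetLike.mem_coe, LinearMap.mem_ker, mulVecLin_apply, ← Atilde_mulVec]
      ext i
      exact congrFun hy (k, i)
  have hL : ∀ w, weightedLaplacian y *ᵥ w = 0 := fun w =>
    LinearMap.mem_ker.1 (hspan (hv ▸ Submodule.mem_top))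
  ext ⟨⟨a, b⟩, hab⟩
  simpa [mulVec_single_one, weightedLaplacian_apply_of_lt y hab] using
    congrFun (hL (Pi.single b 1)) a

end Laplacian

lemma det_map_aeval_ne_zero {σ ι R K : Type*} [Fintype ι] [DecidableEq ι] [CommRing R]
    [CommRing K] [Algebra R K] {x : σ → K} (hx : AlgebraicIndependent R x)
    {P : Matrix ι ι (MvPolynomial σ R)} (hP : P.det ≠ 0) :
    (P.map (MvPolynomial.aeval x)).det ≠ 0 := by
  rw [← AlgHom.mapMatrix_apply, ← AlgHom.map_det]
  exact (map_ne_zero_iff _ (algebraicIndependent_iff_injective_aeval.1 hx)).2 hP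

noncomputable def genericAffineMatrix (R : Type*) [CommRing R] (τ : ℕ) :
    Matrix (Fin (τ + 1)) (Fin (τ + 1)) (MvPolynomial (Fin τ × Fin (τ + 1)) R) :=
  of (Fin.cons 1 fun k j => MvPolynomial.X (k, j))

lemma det_genericAffineMatrix_ne_zero (R : Type*) [CommRing R] [Nontrivial R] (τ : ℕ) :
    (genericAffineMatrix R τ).det ≠ 0 := by
  intro h
  have hspec := congrArg (MvPolynomial.eval fun p : Fin τ × Fin (τ + 1) =>
    if p.2 = p.1.succ then (1 : R) else 0) h
  rw [RingHom.map_det, map_zero, det_of_isUpperTriangular] at hspec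
  · simp [Fin.prod_univ_succ, genericAffineMatrix] at hspec
  · intro i j hji
    cases i using Fin.cases with
    | zero => exact absurd hji (Fin.not_lt_zero j)
    | succ k => simpa [genericAffineMatrix] using hji.ne

theorem span_insert_one_range_eq_top {R K : Type*} [CommRing R] [Nontrivial R] [Field K]
    [Algebra R K] {τ : ℕ} {v : Fin τ → Fin (τ + 1) → K}
    (hv : AlgebraicIndependent R fun p : Fin τ × Fin (τ + 1) => v p.1 p.2) :
    Submodule.span K (insert 1 (Set.range v)) = ⊤ := by
  have hdet : (of (Fin.cons 1 v : Fin (τ + 1) → Fin (τ + 1) → K)).det ≠ 0 := by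
    convert det_map_aeval_ne_zero hv (det_genericAffineMatrix_ne_zero R τ) using 2
    ext i j
    cases i using Fin.cases <;> simp [genericAffineMatrix]
  rw [← Fin.range_cons]
  exact (linearIndependent_rows_of_det_ne_zero hdet).span_eq_top_of_card_eq_finrank (by simp)

lemma card_CEdge (n : ℕ) : Fintype.card (CEdge n) = n * (n - 1) / 2 := by
  rw [Fintype.card_subtype, Fintype.card_product_filter_lt, Fintype.card_fin,
    Nat.choose_two_right]

/-- with `τ = n − 1` generic real measurements, `A(v)` has full column rank
`e = n(n−1)/2`; equivalently `y ↦ A(v)y` is injective, so for every `i` the equation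
`i = A(v)y` has at most one solution. -/
theorem stmt4 (n : ℕ) (hn : 2 ≤ n) (v : Fin (n - 1) → Fin n → ℝ)
    (hgen : AlgebraicIndependent ℚ (fun p : Fin (n - 1) × Fin n => v p.1 p.2)) :
    (Astack v).rank = n * (n - 1) / 2 ∧
    Function.Injective (fun y : CEdge n → ℝ => Astack v *ᵥ y) ∧
    ∀ (i : Fin (n - 1) × Fin n → ℝ) (y y' : CEdge n → ℝ),
      i = Astack v *ᵥ y → i = Astack v *ᵥ y' → y = y' := by
  obtain ⟨τ, rfl⟩ : ∃ τ, n = τ + 1 := ⟨n - 1, by omega⟩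
  have hinj : Function.Injective (Astack v).mulVecLin :=
    Astack_mulVec_injective (span_insert_one_range_eq_top hgen)
  refine ⟨?_, hinj, fun i y y' h h' => hinj (h.symm.trans h')⟩
  rw [Matrix.rank, LinearMap.finrank_range_of_inj hinj, Module.finrank_fintype_fun_eq_card,
    card_CEdge]
end

section
/- Let n ≥ 2, τ ≥ 1, e = n(n−1)/2, and let v = (V^{(1)},…,V^{(τ)}) ∈ ℂ^{nτ} be a stack of τ vectors V^{(k)} ∈ ℂ^n. Then a vector z = (z^{(1)},…,z^{(τ)}) ∈ ℂ^{nτ} satisfies A(v)ᵀ z = 0 if and only if for every edge (i,j) with 1 ≤ i < j ≤ n one has Σ_{k=1}^{τ} (V_i^{(k)} − V_j^{(k)})(z_i^{(k)} − z_j^{(k)}) = 0; consequently the null space of A(v)ᵀ coincides, under reindexing z ↦ (x_i = (z_i^{(1)},…,z_i^{(τ)}))_i, with the null space of the complex rigidity matrix R(x) of the complete graph at the configuration x_i = (V_i^{(1)},…,V_i^{(τ)}) ∈ ℂ^τ, and rank A(v) = rank R(x) over ℂ. -/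
open Matrix BigOperators

lemma sum_incid_mul {n : ℕ} (a b : Fin n) (hab : a ≠ b) (g : Fin n → ℂ) :
    ∑ i : Fin n, (if i = a then (1:ℂ) else if i = b then -1 else 0) * g i = g a - g b := by
  have h : ∀ i : Fin n, (if i = a then (1:ℂ) else if i = b then -1 else 0) * g i
      = (if i = a then g a else 0) + (if i = b then -(g b) else 0) := by
    intro i
    by_cases h1 : i = a
    · subst h1; simp [hab]
    · by_cases h2 : i = b <;> simp [h1, h2, Ne.symm hab]
  simp_rw [h, Finset.sum_add_distrib, Finset.sum_ite_eq', Finset.mem_univ, if_true]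
  ring

lemma hd_incid {n τ : ℕ} (v : Fin τ → Fin n → ℂ) (l : CEdge n) (k : Fin τ) :
    ((incid ℂ n)ᵀ *ᵥ v k) l = v k l.val.1 - v k l.val.2 := by
  simpa [mulVec, dotProduct, transpose_apply, incid] using
    sum_incid_mul l.val.1 l.val.2 (ne_of_lt l.prop) (v k)

lemma key {n τ : ℕ} (v : Fin τ → Fin n → ℂ) (z : Fin τ × Fin n → ℂ) (l : CEdge n) :
    ((Astack v)ᵀ *ᵥ z) l =
      ∑ k : Fin τ, (v k l.val.1 - v k l.val.2) * (z (k, l.val.1) - z (k, l.val.2)) := by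
  have hab : l.val.1 ≠ l.val.2 := ne_of_lt l.prop
  calc ((Astack v)ᵀ *ᵥ z) l
      = ∑ k : Fin τ, ∑ i : Fin n, Astack v (k, i) l * z (k, i) := by
        simp [mulVec, dotProduct, transpose_apply, Fintype.sum_prod_type]
    _ = ∑ k : Fin τ, (v k l.val.1 - v k l.val.2) * (z (k, l.val.1) - z (k, l.val.2)) := by
        refine Finset.sum_congr rfl fun k _ => ?_
        have h2 : ∀ i : Fin n, Astack v (k, i) l * z (k, i)
            = (v k l.val.1 - v k l.val.2)
              * ((if i = l.val.1 then (1:ℂ) else if i = l.val.2 then -1 else 0) * z (k, i)) := by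
          intro i
          simp only [Astack, Atilde, Matrix.of_apply, mul_diagonal]
          rw [hd_incid v l k]
          simp only [incid, Matrix.of_apply]
          ring
        simp_rw [h2, ← Finset.mul_sum]
        rw [sum_incid_mul l.val.1 l.val.2 hab (fun i => z (k, i))]

lemma rigid_eq {n τ : ℕ} (v : Fin τ → Fin n → ℂ) :
    rigidityM (fun i k => v k i)
      = ((Astack v)ᵀ).submatrix id (Equiv.prodComm (Fin n) (Fin τ)) := by
  ext l ⟨i, k⟩
  have : ((Astack v)ᵀ).submatrix id (Equiv.prodComm (Fin n) (Fin τ)) l (i, k)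
      = (if i = l.val.1 then (1:ℂ) else if i = l.val.2 then -1 else 0)
        * (v k l.val.1 - v k l.val.2) := by
    simp only [submatrix_apply, id_eq, Equiv.prodComm_apply, Prod.swap_prod_mk,
      transpose_apply, Astack, Atilde, Matrix.of_apply, mul_diagonal]
    rw [hd_incid v l k]
    simp only [incid, Matrix.of_apply]
  rw [this]
  have hab : l.val.1 ≠ l.val.2 := ne_of_lt l.prop
  simp only [rigidityM, Matrix.of_apply]
  by_cases h1 : i = l.val.1
  · simp [h1]
  · by_cases h2 : i = l.val.2 <;> simp [h1, h2]

lemma rank_col_equiv {m o p : Type*} [Fintype m] [Fintype o] [Fintype p]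
    (A : Matrix m o ℂ) (e : p ≃ o) : (A.submatrix id e).rank = A.rank := by
  have hr : LinearMap.range (A.submatrix id ⇑e).mulVecLin = LinearMap.range A.mulVecLin := by
    apply le_antisymm
    · rintro y ⟨x, rfl⟩
      refine ⟨x ∘ e.symm, ?_⟩
      simp [mulVecLin, submatrix_mulVec_equiv]
    · rintro y ⟨x, rfl⟩
      refine ⟨x ∘ e, ?_⟩
      have h : (x ∘ ⇑e) ∘ ⇑e.symm = x := by ext j; simp
      simp [mulVecLin, submatrix_mulVec_equiv, h]
  rw [Matrix.rank, Matrix.rank, hr]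

/-- over `ℂ`, `z` is in the null space of `A(v)ᵀ` iff
`∑_{k} (V_i^(k) − V_j^(k))(z_i^(k) − z_j^(k)) = 0` for every edge `(i,j)`, `i < j`;
consequently the null space of `A(v)ᵀ` coincides, under reindexing, with the null space
of the complex rigidity matrix `R(x)` at `x i = (V_i^(1), …, V_i^(τ))`, and
`rank A(v) = rank R(x)` over `ℂ`. -/
theorem stmt12 (n τ : ℕ) (hn : 2 ≤ n) (hτ : 1 ≤ τ) (v : Fin τ → Fin n → ℂ) :
    (∀ z : Fin τ × Fin n → ℂ,
        (Astack v)ᵀ *ᵥ z = 0 ↔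
        ∀ l : CEdge n,
          ∑ k : Fin τ,
            (v k l.val.1 - v k l.val.2) * (z (k, l.val.1) - z (k, l.val.2)) = 0) ∧
    (∀ z : Fin τ × Fin n → ℂ,
        (Astack v)ᵀ *ᵥ z = 0 ↔
        rigidityM (fun i k => v k i) *ᵥ (fun p : Fin n × Fin τ => z (p.2, p.1)) = 0) ∧
    ((Astack v).rank = (rigidityM (fun i k => v k i)).rank) := by
  have hv : ∀ z : Fin τ × Fin n → ℂ,
      rigidityM (fun i k => v k i) *ᵥ (fun p : Fin n × Fin τ => z (p.2, p.1))
        = (Astack v)ᵀ *ᵥ z := by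
    intro z
    rw [rigid_eq v]
    rw [show (fun p : Fin n × Fin τ => z (p.2, p.1))
        = z ∘ (Equiv.prodComm (Fin n) (Fin τ)) from rfl]
    rw [submatrix_mulVec_equiv]
    have h2 : (z ∘ ⇑(Equiv.prodComm (Fin n) (Fin τ))) ∘ ⇑(Equiv.prodComm (Fin n) (Fin τ)).symm
        = z := by ext p; simp
    rw [h2]
    ext l
    simp
  refine ⟨fun z => ?_, fun z => ?_, ?_⟩
  · constructor
    · intro h l
      rw [← key v z l, h]; rfl
    · intro h
      funext l
      rw [key v z l, h l]; rfl
  · rw [hv z]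
  · rw [rigid_eq v, rank_col_equiv, Matrix.rank_transpose]
end
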